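/- arXiv:1407.7001 — 6 statements merged into one kernel-verified Lean document; each statement's English description precedes it below -/
import Mathlib

section
/- The Perk–Schultz matrix satisfies the unitarity relation: for all z, w ∈ ℂ, R_q(z,w) ∘ c ∘ R_q(w,z) ∘ c = (z q − w q^{−1})(w q − z q^{−1}) · Id_{V ⊗ V}. -/
/-!
Common setup: `V = ℂ^(M+N)` is modeled as `Fin (M+N) → ℂ`, and `V ⊗ V` as
`Fin (M+N) × Fin (M+N) → ℂ`.  Linear operators on `V ⊗ V` are modeled as matrices
indexed by `Fin (M+N) × Fin (M+N)`, acting on column vectors by `Matrix.mulVec`,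
so that composition of operators corresponds to matrix multiplication.

Indices `i : Fin (M+N)` correspond to `i+1 ∈ I = {1, …, M+N}`; thus the condition
`i ≤ M` of the paper becomes `(i : ℕ) < M`.
-/

namespace PS

/-- The parity `|i| ∈ {0,1}`: `0` if `i ≤ M`, `1` if `i > M`. -/
def par (M : ℕ) {k : ℕ} (i : Fin k) : ℕ := if (i : ℕ) < M then 0 else 1

/-- `q_i = q^{d_i}`: equals `q` if `i ≤ M` and `q⁻¹` if `i > M`. -/
noncomputable def qi (M : ℕ) (q : ℂ) {k : ℕ} (i : Fin k) : ℂ := if (i : ℕ) < M then q else q⁻¹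

/-- The Perk–Schultz matrix `R_q(z,w)`, given by its entries: row `p = (a,b)`,
column `c = (c,d)`.  The only nonzero entries are
`R_{(a,a),(a,a)} = z q_a − w q_a⁻¹`, `R_{(a,b),(a,b)} = z − w` for `a ≠ b`,
`R_{(b,a),(a,b)} = z (q_a − q_a⁻¹)` for `a < b`, and
`R_{(a,b),(b,a)} = (−1)^{|a|+|b|} w (q_b − q_b⁻¹)` for `a < b`. -/
noncomputable def R (M : ℕ) (q : ℂ) {k : ℕ} (z w : ℂ) :
    Matrix (Fin k × Fin k) (Fin k × Fin k) ℂ := Matrix.of fun p c =>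
  if p.1 = c.1 ∧ p.2 = c.2 then
    (if c.1 = c.2 then z * qi M q c.1 - w * (qi M q c.1)⁻¹ else z - w)
  else if p.1 = c.2 ∧ p.2 = c.1 then
    (if c.1 < c.2 then z * (qi M q c.1 - (qi M q c.1)⁻¹)
     else (-1 : ℂ) ^ (par M c.1 + par M c.2) * w * (qi M q c.1 - (qi M q c.1)⁻¹))
  else 0

/-- The graded flip `c : V ⊗ V → V ⊗ V`, `c(v_i ⊗ v_j) = (−1)^{|i||j|} v_j ⊗ v_i`. -/
def gflip (M : ℕ) {k : ℕ} : Matrix (Fin k × Fin k) (Fin k × Fin k) ℂ :=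
  Matrix.of fun p c =>
    if p.1 = c.2 ∧ p.2 = c.1 then (-1 : ℂ) ^ (par M c.1 * par M c.2) else 0

/-- `A ⊗ Id_V` acting on `V ⊗ V ⊗ V` (on tensor factors 1,2). -/
def lift12 {k : ℕ} (A : Matrix (Fin k × Fin k) (Fin k × Fin k) ℂ) :
    Matrix (Fin k × Fin k × Fin k) (Fin k × Fin k × Fin k) ℂ :=
  Matrix.of fun p r => if p.2.2 = r.2.2 then A (p.1, p.2.1) (r.1, r.2.1) else 0

/-- `Id_V ⊗ A` acting on `V ⊗ V ⊗ V` (on tensor factors 2,3). -/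
def lift23 {k : ℕ} (A : Matrix (Fin k × Fin k) (Fin k × Fin k) ℂ) :
    Matrix (Fin k × Fin k × Fin k) (Fin k × Fin k × Fin k) ℂ :=
  Matrix.of fun p r => if p.1 = r.1 then A p.2 r.2 else 0

end PS


/-!
Both `R(z,w)` and the graded flip `c` preserve the span of `v_a ⊗ v_b` and `v_b ⊗ v_a`, so
`Ř(z,w) = R(z,w) ∘ c` is block diagonal, with blocks of size one (`a = b`) and two (`a ≠ b`), and
unitarity, `Ř(z,w) Ř(w,z) = (zq − wq⁻¹)(wq − zq⁻¹)`, is checked block by block.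
On a block of size one it is the identity
`(z q_a − w q_a⁻¹)(w q_a − z q_a⁻¹) = (zq − wq⁻¹)(wq − zq⁻¹)`, symmetric under `q ↔ q⁻¹`.
On a block of size two the off-diagonal entries are `±(z − w)` and the diagonal entries satisfy
`Ř(w,z)_{ba,ba} = Ř(z,w)_{ab,ab}`, so the off-diagonal entries of the product cancel; this is where
the sign `(−1)^{|a|+|b|}` enters, through `q_a − q_a⁻¹ = (−1)^{|a|} (q − q⁻¹)`. The diagonal
entries of the product are `zw (q − q⁻¹)² − (z − w)²`, which equals the scalar once `q q⁻¹ = 1`.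
-/

theorem Matrix.mul_apply_eq_sum_pair_swap {ι α : Type*} [Fintype ι] [DecidableEq ι]
    [NonUnitalNonAssocSemiring α] {A : Matrix (ι × ι) (ι × ι) α}
    (hA : ∀ p r, r ≠ p → r ≠ p.swap → A p r = 0) (B : Matrix (ι × ι) (ι × ι) α) (p c : ι × ι) :
    (A * B) p c = ∑ r ∈ {p, p.swap}, A p r * B r c := by
  rw [Matrix.mul_apply]
  refine (Finset.sum_subset (Finset.subset_univ _) fun r _ hr => ?_).symm
  simp only [Finset.mem_insert, Finset.mem_singleton, not_or] at hr
  rw [hA p r hr.1 hr.2, zero_mul]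

theorem neg_one_pow_mul_self {R : Type*} [Monoid R] [HasDistribNeg R] (n : ℕ) :
    (-1 : R) ^ n * (-1) ^ n = 1 := by
  rw [← pow_add, ← two_mul, pow_mul, neg_one_sq, one_pow]

namespace PS

variable {M k : ℕ} (q : ℂ)

theorem qi_sub_inv (a : Fin k) : qi M q a - (qi M q a)⁻¹ = (-1) ^ par M a * (q - q⁻¹) := by
  unfold qi par; split_ifs <;> simp

theorem unitarity_factor_qi_eq (z w : ℂ) (a : Fin k) :
    (z * qi M q a - w * (qi M q a)⁻¹) * (w * qi M q a - z * (qi M q a)⁻¹)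
      = (z * q - w * q⁻¹) * (w * q - z * q⁻¹) := by
  unfold qi; split_ifs
  · rfl
  · rw [inv_inv]; ring

theorem R_apply_eq_zero (z w : ℂ) {p c : Fin k × Fin k} (h₁ : c ≠ p) (h₂ : c ≠ p.swap) :
    R M q z w p c = 0 := by
  have g₁ : ¬(p.1 = c.1 ∧ p.2 = c.2) := fun h => h₁ (Prod.ext h.1.symm h.2.symm)
  have g₂ : ¬(p.1 = c.2 ∧ p.2 = c.1) := fun h => h₂ (Prod.ext h.2.symm h.1.symm)
  simp [R, g₁, g₂]

noncomputable def Rcheck (M : ℕ) (q : ℂ) {k : ℕ} (z w : ℂ) :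
    Matrix (Fin k × Fin k) (Fin k × Fin k) ℂ :=
  R M q z w * gflip M

theorem mul_gflip_apply (A : Matrix (Fin k × Fin k) (Fin k × Fin k) ℂ) (p c : Fin k × Fin k) :
    (A * gflip M (k := k)) p c = (-1) ^ (par M c.1 * par M c.2) * A p c.swap := by
  rw [Matrix.mul_apply, Finset.sum_eq_single c.swap]
  · simp [gflip, mul_comm]
  · intro r _ hr
    have h : ¬(r.1 = c.2 ∧ r.2 = c.1) := fun h => hr (Prod.ext h.1 h.2)
    simp [gflip, h]
  · simp

theorem Rcheck_apply (z w : ℂ) (p c : Fin k × Fin k) :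
    Rcheck M q z w p c = (-1) ^ (par M c.1 * par M c.2) * R M q z w p c.swap :=
  mul_gflip_apply _ p c

theorem Rcheck_apply_eq_zero (z w : ℂ) {p c : Fin k × Fin k} (h₁ : c ≠ p) (h₂ : c ≠ p.swap) :
    Rcheck M q z w p c = 0 := by
  have g₁ : c.swap ≠ p := fun h => h₂ (by rw [← h, Prod.swap_swap])
  have g₂ : c.swap ≠ p.swap := fun h => h₁ (Prod.swap_injective h)
  rw [Rcheck_apply, R_apply_eq_zero q z w g₁ g₂, mul_zero]

theorem Rcheck_mul_apply (z w z' w' : ℂ) (p c : Fin k × Fin k) :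
    (Rcheck M q z w * Rcheck M q z' w' : Matrix (Fin k × Fin k) (Fin k × Fin k) ℂ) p c
      = ∑ r ∈ {p, p.swap}, Rcheck M q z w p r * Rcheck M q z' w' r c :=
  Matrix.mul_apply_eq_sum_pair_swap (fun _ _ => Rcheck_apply_eq_zero q z w) _ p c

theorem Rcheck_apply_diag (z w : ℂ) (a : Fin k) :
    Rcheck M q z w (a, a) (a, a)
      = (-1) ^ (par M a * par M a) * (z * qi M q a - w * (qi M q a)⁻¹) := by
  simp [Rcheck_apply, R]

theorem Rcheck_apply_swap (z w : ℂ) {a b : Fin k} (hab : a ≠ b) :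
    Rcheck M q z w (a, b) (b, a) = (-1) ^ (par M a * par M b) * (z - w) := by
  simp only [Rcheck_apply, R, Matrix.of_apply, Prod.swap_prod_mk, and_self, ↓reduceIte, hab,
    mul_comm]

theorem Rcheck_swap_apply_swap (z w : ℂ) {a b : Fin k} (hab : a ≠ b) :
    Rcheck M q w z (b, a) (b, a) = Rcheck M q z w (a, b) (a, b) := by
  simp only [Rcheck_apply, R, qi_sub_inv, Prod.swap_prod_mk, Matrix.of_apply, Ne.symm hab, hab,
    and_self, ↓reduceIte, mul_ite]
  rcases lt_or_gt_of_ne hab with h | h <;> simp only [h, h.not_gt, if_true, if_false] <;>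
    unfold par <;> split_ifs <;> ring

theorem Rcheck_apply_self_mul (z w : ℂ) {a b : Fin k} (hab : a ≠ b) :
    Rcheck M q z w (a, b) (a, b) * Rcheck M q w z (a, b) (a, b) = z * w * (q - q⁻¹) ^ 2 := by
  simp only [Rcheck_apply, R, qi_sub_inv, Prod.swap_prod_mk, Matrix.of_apply, hab, Ne.symm hab,
    and_self, ↓reduceIte, mul_ite, ite_mul]
  unfold par; split_ifs <;> ring

theorem Rcheck_mul_Rcheck_apply_of_ne (z w : ℂ) {p c : Fin k × Fin k} (hcp : c ≠ p) :
    (Rcheck M q z w * Rcheck M q w z : Matrix (Fin k × Fin k) (Fin k × Fin k) ℂ) p c = 0 := by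
  rw [Rcheck_mul_apply]
  by_cases hc : c = p.swap
  · obtain ⟨a, b⟩ := p
    obtain rfl : c = (b, a) := hc
    have hab : a ≠ b := fun h => hcp (by rw [h])
    rw [Prod.swap_prod_mk, Finset.sum_pair (Ne.symm hcp), Rcheck_apply_swap q z w hab,
      Rcheck_swap_apply_swap q z w hab, Rcheck_apply_swap q w z hab]
    ring
  · refine Finset.sum_eq_zero fun r hr => ?_
    have hcr : c ≠ r ∧ c ≠ r.swap := by
      rcases Finset.mem_insert.1 hr with rfl | hr
      · exact ⟨hcp, hc⟩
      · rw [Finset.mem_singleton.1 hr, Prod.swap_swap]; exact ⟨hc, hcp⟩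
    rw [Rcheck_apply_eq_zero q w z hcr.1 hcr.2, mul_zero]

theorem Rcheck_mul_Rcheck_apply_self (hq : q ≠ 0) (z w : ℂ) (p : Fin k × Fin k) :
    (Rcheck M q z w * Rcheck M q w z : Matrix (Fin k × Fin k) (Fin k × Fin k) ℂ) p p
      = (z * q - w * q⁻¹) * (w * q - z * q⁻¹) := by
  obtain ⟨a, b⟩ := p
  rw [Rcheck_mul_apply, Prod.swap_prod_mk]
  rcases eq_or_ne a b with rfl | hab
  · rw [Finset.insert_eq_self.2 (Finset.mem_singleton_self _), Finset.sum_singleton,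
      Rcheck_apply_diag, Rcheck_apply_diag, mul_mul_mul_comm, neg_one_pow_mul_self, one_mul,
      unitarity_factor_qi_eq]
  · rw [Finset.sum_pair fun h => hab (Prod.ext_iff.1 h).1, Rcheck_apply_self_mul q z w hab,
      Rcheck_apply_swap q z w hab, Rcheck_apply_swap q w z (Ne.symm hab), Nat.mul_comm (par M b)]
    linear_combination
      (z - w) ^ 2 * (mul_inv_cancel₀ hq - neg_one_pow_mul_self (R := ℂ) (par M a * par M b))

end PS

open PS in
theorem perkSchultz_unitarity_general (M N : ℕ) (q : ℂ) (hq : q ≠ 0)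
    (z w : ℂ) :
    R M q z w * gflip M * R M q w z * gflip M
      = ((z * q - w * q⁻¹) * (w * q - z * q⁻¹)) •
          (1 : Matrix (Fin (M + N) × Fin (M + N)) (Fin (M + N) × Fin (M + N)) ℂ) := by
  rw [Matrix.mul_assoc (R M q z w * gflip M)]
  ext p c
  rw [Matrix.smul_apply, Matrix.one_apply]
  split_ifs with hpc
  · subst hpc
    rw [smul_eq_mul, mul_one]
    exact Rcheck_mul_Rcheck_apply_self q hq z w p
  · rw [smul_zero]
    exact Rcheck_mul_Rcheck_apply_of_ne q z w (Ne.symm hpc)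

open PS in
/-- unitarity of the Perk–Schultz matrix:
`R_q(z,w) ∘ c ∘ R_q(w,z) ∘ c = (zq − wq⁻¹)(wq − zq⁻¹) · Id_{V⊗V}`. -/
theorem perkSchultz_unitarity (M N : ℕ) (hMN : 1 ≤ M + N) (q : ℂ) (hq : q ≠ 0)
    (z w : ℂ) :
    R M q z w * gflip M * R M q w z * gflip M
      = ((z * q - w * q⁻¹) * (w * q - z * q⁻¹)) •
          (1 : Matrix (Fin (M + N) × Fin (M + N)) (Fin (M + N) × Fin (M + N)) ℂ) :=
  perkSchultz_unitarity_general M N q hq z w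
end

section
/- The constant Perk–Schultz matrix R := R_q(1,0) is an invertible linear operator on V ⊗ V, and for all z, w ∈ ℂ one has R_q(z,w) = z · R − w · R′, where R′ := c ∘ R^{−1} ∘ c. -/
/-!
`R_q(z,w)` is linear in `(z,w)`, so `R_q(z,w) = z R_q(1,0) + w R_q(0,1)`. The constant matrix
splits as `R_q(1,0) = D + X` with `D` diagonal (`q_a` at `(a,a)`, `1` elsewhere) and `X` supported
on the entries `((b,a),(a,b))`, `a < b`; then `X² = 0` and `DX = XD = X`, so `R_q(1,0)⁻¹ = D⁻¹ - X`.
Conjugating by the graded flip moves the entry of `X` at `((b,a),(a,b))` to `((a,b),(b,a))`, and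
since `(-1)^{|a|+|b|} (q_b - q_b⁻¹) = q_a - q_a⁻¹` this turns `D⁻¹ - X` into `-R_q(0,1)`.
-/

theorem add_mul_sub_eq_one {A : Type*} [Ring A] {d d' x : A} (hdd' : d * d' = 1)
    (hdx : d * x = x) (hxd' : x * d' = x) (hxx : x * x = 0) : (d + x) * (d' - x) = 1 := by
  rw [add_mul, mul_sub, mul_sub, hdd', hdx, hxd', hxx]
  abel

namespace PS

open Matrix

variable {M : ℕ} {q : ℂ} {k : ℕ}

abbrev Op (k : ℕ) := Matrix (Fin k × Fin k) (Fin k × Fin k) ℂ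

theorem R_eq_smul_add_smul (z w : ℂ) :
    (R M q z w : Op k) = z • R M q 1 0 + w • R M q 0 1 := by
  ext p c
  simp only [R, of_apply, Matrix.add_apply, Matrix.smul_apply, smul_eq_mul]
  split_ifs <;> ring

theorem qi_ne_zero (M : ℕ) (hq : q ≠ 0) (i : Fin k) : qi M q i ≠ 0 := by
  unfold qi
  split_ifs <;> simp [hq]

theorem neg_one_pow_par_add_mul_qi_sub_inv (M : ℕ) (q : ℂ) (a b : Fin k) :
    (-1 : ℂ) ^ (par M a + par M b) * (qi M q b - (qi M q b)⁻¹) = qi M q a - (qi M q a)⁻¹ := by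
  unfold par qi
  split_ifs <;> simp only [pow_zero, pow_one, inv_inv, add_zero, zero_add, one_mul] <;> ring

def flipSign (M : ℕ) (p : Fin k × Fin k) : ℂ := (-1) ^ (par M p.1 * par M p.2)

theorem flipSign_swap (M : ℕ) (p : Fin k × Fin k) : flipSign M p.swap = flipSign M p := by
  simp only [flipSign, Prod.fst_swap, Prod.snd_swap, Nat.mul_comm]

theorem flipSign_mul_self (M : ℕ) (p : Fin k × Fin k) : flipSign M p * flipSign M p = 1 :=
  pow_mul_pow_eq_one _ (by norm_num)

theorem gflip_mul_mul_gflip_apply (A : Op k) (p r : Fin k × Fin k) :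
    (gflip M * A * gflip M : Op k) p r = flipSign M p * A p.swap r.swap * flipSign M r := by
  rw [mul_apply, Fintype.sum_eq_single r.swap, mul_apply, Fintype.sum_eq_single p.swap]
  · simp [gflip, flipSign, Nat.mul_comm]
  all_goals
    intro x hx
    simp only [gflip, of_apply] at hx ⊢
    grind

noncomputable def diagPart (M : ℕ) (q : ℂ) (p : Fin k × Fin k) : ℂ :=
  if p.1 = p.2 then qi M q p.1 else 1

noncomputable def nilPart (M : ℕ) (q : ℂ) : Op k :=
  of fun p c => if p = c.swap ∧ c.1 < c.2 then qi M q c.1 - (qi M q c.1)⁻¹ else 0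

theorem diagPart_ne_zero (hq : q ≠ 0) (p : Fin k × Fin k) : diagPart M q p ≠ 0 := by
  unfold diagPart
  split_ifs
  exacts [qi_ne_zero M hq _, one_ne_zero]

theorem R_one_zero_eq_diagonal_add_nilPart :
    (R M q 1 0 : Op k) = diagonal (diagPart M q) + nilPart M q := by
  ext p c
  simp only [R, nilPart, diagPart, of_apply, Matrix.add_apply, diagonal_apply, Prod.ext_iff,
    Prod.fst_swap, Prod.snd_swap]
  split_ifs <;> grind

theorem nilPart_mul_self : (nilPart M q * nilPart M q : Op k) = 0 := by
  ext p r
  refine Finset.sum_eq_zero fun x _ => ?_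
  simp only [nilPart, of_apply]
  split_ifs <;> grind

theorem diagonal_mul_nilPart {d : Fin k × Fin k → ℂ}
    (hd : ∀ p : Fin k × Fin k, p.1 ≠ p.2 → d p = 1) :
    diagonal d * nilPart M q = nilPart M q := by
  ext p c
  simp only [diagonal_mul, nilPart, of_apply]
  split_ifs with h
  · rw [hd p (by grind), one_mul]
  · rw [mul_zero]

theorem nilPart_mul_diagonal {d : Fin k × Fin k → ℂ}
    (hd : ∀ p : Fin k × Fin k, p.1 ≠ p.2 → d p = 1) :
    nilPart M q * diagonal d = nilPart M q := by
  ext p c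
  simp only [mul_diagonal, nilPart, of_apply]
  split_ifs with h
  · rw [hd c h.2.ne, mul_one]
  · rw [zero_mul]

theorem R_one_zero_mul_diagonal_inv_sub_nilPart (hq : q ≠ 0) :
    (R M q 1 0 : Op k) * (diagonal (diagPart M q)⁻¹ - nilPart M q) = 1 := by
  have hd : ∀ p : Fin k × Fin k, p.1 ≠ p.2 → diagPart M q p = 1 := fun p hp => if_neg hp
  have hd_inv : ∀ p : Fin k × Fin k, p.1 ≠ p.2 → (diagPart M q)⁻¹ p = 1 := fun p hp => by
    simp [hd p hp]
  have hdd_inv : diagonal (diagPart M q) * diagonal (diagPart M q)⁻¹ = (1 : Op k) := by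
    rw [diagonal_mul_diagonal, ← diagonal_one]
    exact congrArg diagonal (funext fun p => mul_inv_cancel₀ (diagPart_ne_zero hq p))
  rw [R_one_zero_eq_diagonal_add_nilPart]
  exact add_mul_sub_eq_one hdd_inv (diagonal_mul_nilPart hd) (nilPart_mul_diagonal hd_inv)
    nilPart_mul_self

theorem gflip_mul_diagonal_inv_sub_nilPart_mul_gflip :
    (gflip M * (diagonal (diagPart M q)⁻¹ - nilPart M q) * gflip M : Op k) = -R M q 0 1 := by
  ext p r
  rw [gflip_mul_mul_gflip_apply]
  have key := neg_one_pow_par_add_mul_qi_sub_inv M q p.1 p.2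
  have hsign : r = p ∨ r = p.swap → flipSign M p * flipSign M r = 1 := by
    rintro (rfl | rfl)
    exacts [flipSign_mul_self M r, by rw [flipSign_swap, flipSign_mul_self]]
  simp only [R, diagPart, nilPart, of_apply, diagonal_apply, Matrix.sub_apply, Matrix.neg_apply,
    Prod.fst_swap, Prod.snd_swap, Pi.inv_apply, Prod.ext_iff]
  split_ifs <;> grind

end PS

open PS in
theorem perkSchultz_decomposition_general (M N : ℕ) (q : ℂ) (hq : q ≠ 0) :
    IsUnit (R M q 1 0 :
        Matrix (Fin (M + N) × Fin (M + N)) (Fin (M + N) × Fin (M + N)) ℂ)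
    ∧ ∀ z w : ℂ,
        R (k := M + N) M q z w
          = z • R M q 1 0 - w • (gflip M * (R M q 1 0)⁻¹ * gflip M) := by
  have hinv := R_one_zero_mul_diagonal_inv_sub_nilPart (M := M) (k := M + N) hq
  refine ⟨IsUnit.of_mul_eq_one _ hinv, fun z w => ?_⟩
  rw [Matrix.inv_eq_right_inv hinv, gflip_mul_diagonal_inv_sub_nilPart_mul_gflip,
    R_eq_smul_add_smul, smul_neg, sub_neg_eq_add]

open PS in
/-- the constant Perk–Schultz matrix `R := R_q(1,0)` is invertible,
and `R_q(z,w) = z·R − w·R′` where `R′ = c ∘ R⁻¹ ∘ c`. -/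
theorem perkSchultz_decomposition (M N : ℕ) (hMN : 1 ≤ M + N) (q : ℂ) (hq : q ≠ 0) :
    IsUnit (R M q 1 0 :
        Matrix (Fin (M + N) × Fin (M + N)) (Fin (M + N) × Fin (M + N)) ℂ)
    ∧ ∀ z w : ℂ,
        R (k := M + N) M q z w
          = z • R M q 1 0 - w • (gflip M * (R M q 1 0)⁻¹ * gflip M) :=
  perkSchultz_decomposition_general M N q hq
end

section
/- Quadratic Hecke relation: with R := R_q(1,0), the operator c ∘ R on V ⊗ V satisfies (c ∘ R)² = (q − q^{−1}) (c ∘ R) + Id_{V ⊗ V}; consequently c ∘ R is invertible with inverse (c ∘ R) − (q − q^{−1}) Id_{V ⊗ V}. -/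
/-!
`c ∘ R_q(1,0)` preserves each line `ℂ (v_a ⊗ v_a)` and each plane spanned by `v_a ⊗ v_b` and
`v_b ⊗ v_a` (`a < b`). On the line it acts by `(-1)^{|a|} q_a ∈ {q, -q⁻¹}`, a root of
`x² = (q - q⁻¹) x + 1`. On the plane its matrix is `[[q - q⁻¹, s], [s, 0]]` with `s = ±1`,
because the sign of the graded flip cancels the sign in `q_a - q_a⁻¹ = ±(q - q⁻¹)`; by
Cayley–Hamilton this matrix satisfies the same quadratic relation.
-/

theorem mul_sub_smul_one_eq_one_of_mul_self_eq {R A : Type*} [Semiring R] [Ring A] [Module R A]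
    [IsScalarTower R A A] [SMulCommClass R A A] {a : A} {c : R} (h : a * a = c • a + 1) :
    a * (a - c • 1) = 1 ∧ (a - c • 1) * a = 1 := by
  constructor
  · rw [mul_sub, mul_smul_comm, mul_one, h, add_sub_cancel_left]
  · rw [sub_mul, smul_mul_assoc, one_mul, h, add_sub_cancel_left]

namespace PS

open Matrix

variable {M k : ℕ}

lemma par_mul_self (i : Fin k) : par M i * par M i = par M i := by
  unfold par; split_ifs <;> rfl

lemma par_le_par_of_lt {i j : Fin k} (h : i < j) : par M i ≤ par M j := by
  unfold par; split_ifs <;> omega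

lemma neg_one_pow_par_mul_qi_sub_inv_of_lt (q : ℂ) {i j : Fin k} (h : i < j) :
    (-1 : ℂ) ^ (par M i * par M j) * (qi M q i - (qi M q i)⁻¹) = q - q⁻¹ := by
  have := par_le_par_of_lt (M := M) h
  unfold qi par at *; split_ifs at * <;> first | omega | simp

lemma neg_one_pow_par_mul_qi_mul_self {q : ℂ} (hq : q ≠ 0) (i : Fin k) :
    ((-1) ^ par M i * qi M q i) * ((-1) ^ par M i * qi M q i)
      = (q - q⁻¹) * ((-1) ^ par M i * qi M q i) + 1 := by
  unfold qi par; split_ifs <;> field_simp <;> ring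

lemma gflip_mulVec_single (a b : Fin k) :
    gflip M *ᵥ Pi.single (a, b) 1 = (-1 : ℂ) ^ (par M a * par M b) • Pi.single (b, a) 1 := by
  ext ⟨x, y⟩
  simp only [mulVec_single_one, col_apply, gflip, of_apply, Pi.smul_apply,
    Pi.single_apply, Prod.mk.injEq, smul_eq_mul, mul_ite, mul_one, mul_zero]

lemma R_one_zero_mulVec_single_self (q : ℂ) (a : Fin k) :
    R M q 1 0 *ᵥ Pi.single (a, a) 1 = qi M q a • Pi.single (a, a) 1 := by
  ext ⟨x, y⟩
  simp only [mulVec_single_one, col_apply, R, of_apply, Pi.smul_apply,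
    Pi.single_apply, Prod.mk.injEq, smul_eq_mul, mul_ite, mul_one, mul_zero]
  grind

lemma R_one_zero_mulVec_single_of_lt (q : ℂ) {a b : Fin k} (h : a < b) :
    R M q 1 0 *ᵥ Pi.single (a, b) 1
      = Pi.single (a, b) 1 + (qi M q a - (qi M q a)⁻¹) • Pi.single (b, a) 1 := by
  ext ⟨x, y⟩
  simp only [mulVec_single_one, col_apply, R, of_apply, Pi.smul_apply,
    Pi.add_apply, Pi.single_apply, Prod.mk.injEq, smul_eq_mul, mul_ite, mul_one, mul_zero]
  grind

lemma R_one_zero_mulVec_single_of_gt (q : ℂ) {a b : Fin k} (h : b < a) :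
    R M q 1 0 *ᵥ Pi.single (a, b) 1 = Pi.single (a, b) 1 := by
  ext ⟨x, y⟩
  simp only [mulVec_single_one, col_apply, R, of_apply,
    Pi.single_apply, Prod.mk.injEq]
  grind

lemma gflip_mul_R_one_zero_mulVec_single_self (q : ℂ) (a : Fin k) :
    (gflip M * R M q 1 0) *ᵥ Pi.single (a, a) 1
      = ((-1) ^ par M a * qi M q a) • Pi.single (a, a) 1 := by
  rw [← mulVec_mulVec, R_one_zero_mulVec_single_self, mulVec_smul, gflip_mulVec_single,
    par_mul_self, smul_smul, mul_comm]

lemma gflip_mul_R_one_zero_mulVec_single_of_lt (q : ℂ) {a b : Fin k} (h : a < b) :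
    (gflip M * R M q 1 0) *ᵥ Pi.single (a, b) 1
      = (-1 : ℂ) ^ (par M a * par M b) • Pi.single (b, a) 1
        + (q - q⁻¹) • Pi.single (a, b) 1 := by
  rw [← mulVec_mulVec, R_one_zero_mulVec_single_of_lt q h, mulVec_add, mulVec_smul,
    gflip_mulVec_single, gflip_mulVec_single, smul_smul, mul_comm (par M b),
    mul_comm (qi M q a - _), neg_one_pow_par_mul_qi_sub_inv_of_lt q h]

lemma gflip_mul_R_one_zero_mulVec_single_of_gt (q : ℂ) {a b : Fin k} (h : b < a) :
    (gflip M * R M q 1 0) *ᵥ Pi.single (a, b) 1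
      = (-1 : ℂ) ^ (par M a * par M b) • Pi.single (b, a) 1 := by
  rw [← mulVec_mulVec, R_one_zero_mulVec_single_of_gt q h, gflip_mulVec_single]

theorem gflip_mul_R_one_zero_mul_self {q : ℂ} (hq : q ≠ 0) :
    (gflip M * R M q 1 0) * (gflip M * R M q 1 0)
      = (q - q⁻¹) • (gflip M * R M q 1 0) + (1 : Matrix (Fin k × Fin k) _ ℂ) := by
  have sign_sq (n : ℕ) : (-1 : ℂ) ^ n * (-1) ^ n = 1 := by rw [← mul_pow]; simp
  refine ext_of_mulVec_single fun ⟨a, b⟩ => ?_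
  rw [← mulVec_mulVec, add_mulVec, smul_mulVec, one_mulVec]
  rcases lt_trichotomy a b with h | rfl | h
  · rw [gflip_mul_R_one_zero_mulVec_single_of_lt q h, mulVec_add, mulVec_smul, mulVec_smul,
      gflip_mul_R_one_zero_mulVec_single_of_gt q h, gflip_mul_R_one_zero_mulVec_single_of_lt q h,
      smul_smul, mul_comm (par M b), sign_sq, one_smul]
    abel
  · rw [gflip_mul_R_one_zero_mulVec_single_self, mulVec_smul,
      gflip_mul_R_one_zero_mulVec_single_self, smul_smul, neg_one_pow_par_mul_qi_mul_self hq,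
      add_smul, one_smul, smul_smul]
  · rw [gflip_mul_R_one_zero_mulVec_single_of_gt q h, mulVec_smul,
      gflip_mul_R_one_zero_mulVec_single_of_lt q h, smul_add, smul_smul, smul_smul,
      mul_comm (par M b), sign_sq, one_smul]
    module

end PS

open PS in
theorem perkSchultz_quadraticHecke_general (M N : ℕ) (q : ℂ) (hq : q ≠ 0) :
    ((gflip M * R M q 1 0) * (gflip M * R M q 1 0)
        = (q - q⁻¹) • (gflip M * R M q 1 0)
          + (1 : Matrix (Fin (M + N) × Fin (M + N)) (Fin (M + N) × Fin (M + N)) ℂ))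
    ∧ (gflip M * R M q 1 0)
        * (gflip M * R M q 1 0
            - (q - q⁻¹) • (1 : Matrix (Fin (M + N) × Fin (M + N)) (Fin (M + N) × Fin (M + N)) ℂ))
        = 1
    ∧ (gflip M * R M q 1 0
            - (q - q⁻¹) • (1 : Matrix (Fin (M + N) × Fin (M + N)) (Fin (M + N) × Fin (M + N)) ℂ))
        * (gflip M * R M q 1 0)
        = 1 := by
  have hecke := gflip_mul_R_one_zero_mul_self (M := M) (k := M + N) hq
  exact ⟨hecke, mul_sub_smul_one_eq_one_of_mul_self_eq hecke⟩

open PS in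
/-- quadratic Hecke relation: with `R := R_q(1,0)`,
`(c ∘ R)² = (q − q⁻¹) (c ∘ R) + Id`, hence `c ∘ R` is invertible with inverse
`(c ∘ R) − (q − q⁻¹) Id`. -/
theorem perkSchultz_quadraticHecke (M N : ℕ) (hMN : 1 ≤ M + N) (q : ℂ) (hq : q ≠ 0) :
    ((gflip M * R M q 1 0) * (gflip M * R M q 1 0)
        = (q - q⁻¹) • (gflip M * R M q 1 0)
          + (1 : Matrix (Fin (M + N) × Fin (M + N)) (Fin (M + N) × Fin (M + N)) ℂ))
    ∧ (gflip M * R M q 1 0)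
        * (gflip M * R M q 1 0
            - (q - q⁻¹) • (1 : Matrix (Fin (M + N) × Fin (M + N)) (Fin (M + N) × Fin (M + N)) ℂ))
        = 1
    ∧ (gflip M * R M q 1 0
            - (q - q⁻¹) • (1 : Matrix (Fin (M + N) × Fin (M + N)) (Fin (M + N) × Fin (M + N)) ℂ))
        * (gflip M * R M q 1 0)
        = 1 :=
  perkSchultz_quadraticHecke_general M N q hq
end

section
/- If moreover q is not a root of unity, then V ⊗ V decomposes as the internal direct sum V ⊗ V = V⁺ ⊕ V⁻; equivalently, the (M+N)² vectors q v_i ⊗ v_j + (−1)^{|i||j|} v_j ⊗ v_i (i < j), v_k ⊗ v_k (k ≤ M), q^{−1} v_i ⊗ v_j − (−1)^{|i||j|} v_j ⊗ v_i (i < j), and v_k ⊗ v_k (k > M) form a basis of V ⊗ V. -/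
namespace PS

/-- The standard basis vector `v_i ⊗ v_j` of `V ⊗ V`. -/
noncomputable def e {k : ℕ} (p : Fin k × Fin k) : Fin k × Fin k → ℂ :=
  Pi.single p 1

/-- The subspace `V⁺ ⊆ V ⊗ V`: span of `q v_i ⊗ v_j + (−1)^{|i||j|} v_j ⊗ v_i`
for `i < j`, and `v_k ⊗ v_k` for `k ≤ M`. -/
noncomputable def Vplus (M : ℕ) {k : ℕ} (q : ℂ) :
    Submodule ℂ (Fin k × Fin k → ℂ) :=
  Submodule.span ℂ
    ({v | ∃ i j : Fin k, i < j ∧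
        v = q • e (i, j) + ((-1 : ℂ) ^ (par M i * par M j)) • e (j, i)}
      ∪ {v | ∃ i : Fin k, (i : ℕ) < M ∧ v = e (i, i)})

/-- The subspace `V⁻ ⊆ V ⊗ V`: span of `q⁻¹ v_i ⊗ v_j − (−1)^{|i||j|} v_j ⊗ v_i`
for `i < j`, and `v_k ⊗ v_k` for `k > M`. -/
noncomputable def Vminus (M : ℕ) {k : ℕ} (q : ℂ) :
    Submodule ℂ (Fin k × Fin k → ℂ) :=
  Submodule.span ℂ
    ({v | ∃ i j : Fin k, i < j ∧
        v = q⁻¹ • e (i, j) - ((-1 : ℂ) ^ (par M i * par M j)) • e (j, i)}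
      ∪ {v | ∃ i : Fin k, M ≤ (i : ℕ) ∧ v = e (i, i)})

/-- The family of `(M+N)²` vectors of Statement 8, indexed by pairs `(i,j)`:
for `i < j` the `V⁺`-type vector, for `i > j` the `V⁻`-type vector (for the pair
`(j,i)` with `j < i`), and on the diagonal the vectors `v_k ⊗ v_k`. -/
noncomputable def fam (M : ℕ) {k : ℕ} (q : ℂ) :
    Fin k × Fin k → (Fin k × Fin k → ℂ) := fun p =>
  if p.1 < p.2 then
    q • e p + ((-1 : ℂ) ^ (par M p.1 * par M p.2)) • e (p.2, p.1)
  else if p.2 < p.1 then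
    q⁻¹ • e (p.2, p.1) - ((-1 : ℂ) ^ (par M p.1 * par M p.2)) • e p
  else e p

end PS

/-!
For `a < b` the two vectors of the family attached to `{a, b}` add up to `(q + q⁻¹) v_a ⊗ v_b`,
and `q + q⁻¹ ≠ 0` because otherwise `q² = -1` and `q⁴ = 1`. Hence the `(M+N)²` vectors span
`V ⊗ V`, so they form a basis by counting dimensions. `V⁺` and `V⁻` are the spans of two
complementary subfamilies of this basis, hence complementary subspaces.
-/

theorem add_inv_ne_zero_of_pow_four_ne_one {K : Type*} [Field K] {q : K} (hq : q ≠ 0)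
    (h4 : q ^ 4 ≠ 1) : q + q⁻¹ ≠ 0 := by
  intro h
  have hsq : q ^ 2 = -1 := by
    field_simp at h
    linear_combination h
  exact h4 (by rw [show 4 = 2 * 2 from rfl, pow_mul, hsq]; norm_num)

namespace PS

variable {M k : ℕ} {q : ℂ}

lemma fam_of_lt {a b : Fin k} (hab : a < b) :
    fam M q (a, b) = q • e (a, b) + ((-1 : ℂ) ^ (par M a * par M b)) • e (b, a) := by
  simp [fam, hab]

lemma fam_of_gt {a b : Fin k} (hab : a < b) :
    fam M q (b, a) = q⁻¹ • e (a, b) - ((-1 : ℂ) ^ (par M a * par M b)) • e (b, a) := by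
  simp [fam, hab, hab.not_gt, mul_comm]

lemma fam_self (a : Fin k) : fam M q (a, a) = e (a, a) := by
  simp [fam]

lemma fam_add_fam_swap {a b : Fin k} (hab : a < b) :
    fam M q (a, b) + fam M q (b, a) = (q + q⁻¹) • e (a, b) := by
  rw [fam_of_lt hab, fam_of_gt hab]
  module

lemma e_mem_span_fam (hs : q + q⁻¹ ≠ 0) (p : Fin k × Fin k) :
    e p ∈ Submodule.span ℂ (Set.range (fam M q)) := by
  set W := Submodule.span ℂ (Set.range (fam M q))
  have fam_mem (p : Fin k × Fin k) : fam M q p ∈ W := Submodule.subset_span ⟨p, rfl⟩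
  have e_mem_of_lt {a b : Fin k} (hab : a < b) : e (a, b) ∈ W := by
    have hsum := W.smul_mem (q + q⁻¹)⁻¹ (W.add_mem (fam_mem (a, b)) (fam_mem (b, a)))
    rwa [fam_add_fam_swap hab, smul_smul, inv_mul_cancel₀ hs, one_smul] at hsum
  obtain ⟨a, b⟩ := p
  rcases lt_trichotomy a b with hab | rfl | hba
  · exact e_mem_of_lt hab
  · exact fam_self (M := M) (q := q) a ▸ fam_mem (a, a)
  · set ε : ℂ := (-1 : ℂ) ^ (par M b * par M a)
    have hε : ε * ε = 1 := by rw [← pow_add, ← two_mul, pow_mul, neg_one_sq, one_pow]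
    have he : e (a, b) = ε • fam M q (b, a) - (ε * q) • e (b, a) := by
      rw [fam_of_lt hba, smul_add, smul_smul, smul_smul, hε, one_smul]
      module
    rw [he]
    exact W.sub_mem (W.smul_mem _ (fam_mem (b, a))) (W.smul_mem _ (e_mem_of_lt hba))

lemma span_range_fam (hs : q + q⁻¹ ≠ 0) :
    Submodule.span ℂ (Set.range (fam (k := k) M q)) = ⊤ := by
  rw [eq_top_iff, ← (Pi.basisFun ℂ (Fin k × Fin k)).span_eq, Submodule.span_le]
  rintro _ ⟨p, rfl⟩
  rw [Pi.basisFun_apply]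
  exact e_mem_span_fam hs p

def plusIndex (M : ℕ) {k : ℕ} : Set (Fin k × Fin k) :=
  {p | p.1 < p.2 ∨ (p.1 = p.2 ∧ (p.1 : ℕ) < M)}

lemma Vplus_eq_span_image : Vplus (k := k) M q = Submodule.span ℂ (fam M q '' plusIndex M) := by
  rw [Vplus]
  congr 1
  ext v
  constructor
  · rintro (⟨a, b, hab, rfl⟩ | ⟨a, ha, rfl⟩)
    · exact ⟨(a, b), Or.inl hab, fam_of_lt hab⟩
    · exact ⟨(a, a), Or.inr ⟨rfl, ha⟩, fam_self a⟩
  · rintro ⟨⟨a, b⟩, hab | ⟨hab, ha⟩, rfl⟩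
    · exact Or.inl ⟨a, b, hab, fam_of_lt hab⟩
    · obtain rfl : a = b := hab
      exact Or.inr ⟨a, ha, fam_self a⟩

lemma Vminus_eq_span_image :
    Vminus (k := k) M q = Submodule.span ℂ (fam M q '' (plusIndex M)ᶜ) := by
  rw [Vminus]
  congr 1
  ext v
  constructor
  · rintro (⟨a, b, hab, rfl⟩ | ⟨a, ha, rfl⟩)
    · refine ⟨(b, a), fun h => ?_, fam_of_gt hab⟩
      rcases h with hba | ⟨hba, -⟩
      exacts [hab.not_gt hba, hab.ne' hba]
    · exact ⟨(a, a), fun h => by simp [plusIndex] at h; omega, fam_self a⟩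
  · rintro ⟨⟨a, b⟩, hp, rfl⟩
    simp only [plusIndex, Set.mem_compl_iff, Set.mem_ofPred_eq, not_or, not_and, not_lt] at hp
    rcases lt_trichotomy a b with hab | rfl | hba
    · exact absurd hab (not_lt.mpr hp.1)
    · exact Or.inr ⟨a, hp.2 rfl, fam_self a⟩
    · exact Or.inl ⟨b, a, hba, fam_of_gt hba⟩

end PS

open PS in
theorem perkSchultz_directSum_general (M N : ℕ) (q : ℂ) (hq : q ≠ 0)
    (hroot : ∀ m : ℕ, m ≠ 0 → q ^ m ≠ 1) :
    IsCompl (Vplus (k := M + N) M q) (Vminus M q)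
    ∧ LinearIndependent ℂ (fam (k := M + N) M q)
    ∧ Submodule.span ℂ (Set.range (fam (k := M + N) M q)) = ⊤ := by
  have hs : q + q⁻¹ ≠ 0 := add_inv_ne_zero_of_pow_four_ne_one hq (hroot 4 four_ne_zero)
  have hspan := span_range_fam (k := M + N) (M := M) hs
  have hli : LinearIndependent ℂ (fam (k := M + N) M q) :=
    linearIndependent_of_top_le_span_of_card_eq_finrank hspan.ge (by simp)
  refine ⟨?_, hli, hspan⟩
  rw [Vplus_eq_span_image, Vminus_eq_span_image]
  exact hli.isCompl_span_image hspan isCompl_compl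

open PS in
/-- if `q` is nonzero and not a root of unity, then
`V ⊗ V = V⁺ ⊕ V⁻` (internal direct sum); equivalently, the `(M+N)²` vectors
`q v_i ⊗ v_j + (−1)^{|i||j|} v_j ⊗ v_i` (`i < j`), `v_k ⊗ v_k` (`k ≤ M`),
`q⁻¹ v_i ⊗ v_j − (−1)^{|i||j|} v_j ⊗ v_i` (`i < j`), `v_k ⊗ v_k` (`k > M`)
form a basis of `V ⊗ V`. -/
theorem perkSchultz_directSum (M N : ℕ) (hMN : 1 ≤ M + N) (q : ℂ) (hq : q ≠ 0)
    (hroot : ∀ m : ℕ, m ≠ 0 → q ^ m ≠ 1) :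
    IsCompl (Vplus (k := M + N) M q) (Vminus M q)
    ∧ LinearIndependent ℂ (fam (k := M + N) M q)
    ∧ Submodule.span ℂ (Set.range (fam (k := M + N) M q)) = ⊤ :=
  perkSchultz_directSum_general M N q hq hroot
end

section
/- The polynomials f_1, …, f_k are linearly independent in ℂ[z] if and only if a_i ≠ a_j′ for all 1 ≤ i < j ≤ k. -/
open Polynomial

namespace PS12

/-- The polynomial `f_j(z) = (∏_{i<j} (1 − z a_i)) · (∏_{i>j} (1 − z a_i'))`. -/
noncomputable def f {k : ℕ} (a a' : Fin k → ℂ) (j : Fin k) : Polynomial ℂ :=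
  (∏ i ∈ Finset.univ.filter (fun i => i < j), (1 - C (a i) * X)) *
  (∏ i ∈ Finset.univ.filter (fun i => j < i), (1 - C (a' i) * X))

end PS12

/-! Reflecting `p ↦ z ^ (k - 1) p(1 / z)` turns the factors `1 - a z` into `z - a`, so it suffices
to treat `F_j = ∏_{i<j} (z - a_i) ∏_{i>j} (z - a'_i)`. Under the condition, induct on `k`: every
`F_j` with `j > 1` is `(z - a_1)` times a member of the family for `a_2, …, a_k`, while `F_1` does
not vanish at `a_1`. If `a_i = a'_j` with `i < j`, then `z - a_i` divides every `F_m`, and the `k`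
quotients lie in the `(k - 1)`-dimensional space of polynomials of degree `< k - 1`. -/

open Finset

section LowerUpperProd

variable {M : Type*} [CommMonoid M] {k : ℕ}

def lowerUpperProd (p q : Fin k → M) (j : Fin k) : M :=
  (∏ i ∈ univ.filter (· < j), p i) * ∏ i ∈ univ.filter (j < ·), q i

theorem lowerUpperProd_zero (p q : Fin (k + 1) → M) :
    lowerUpperProd p q 0 = ∏ i : Fin k, q i.succ := by
  simp [lowerUpperProd, prod_filter, Fin.prod_univ_succ, Fin.succ_pos]

theorem lowerUpperProd_succ (p q : Fin (k + 1) → M) (j : Fin k) :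
    lowerUpperProd p q j.succ = p 0 * lowerUpperProd (Fin.tail p) (Fin.tail q) j := by
  simp [lowerUpperProd, prod_filter, Fin.prod_univ_succ, Fin.succ_pos, Fin.tail, mul_assoc]

theorem dvd_lowerUpperProd {p q : Fin k → M} {i j : Fin k} (hij : i < j) (h : p i = q j)
    (m : Fin k) : p i ∣ lowerUpperProd p q m := by
  rcases lt_or_ge m j with hm | hm
  · rw [h]
    exact (dvd_prod_of_mem q (by simpa using hm)).mul_left _
  · exact (dvd_prod_of_mem p (by simpa using hij.trans_le hm)).mul_right _

theorem card_filter_lt_add_card_filter_gt (j : Fin k) :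
    #(univ.filter (· < j)) + #(univ.filter (j < ·)) = k - 1 := by
  rw [filter_gt_eq_Iio, filter_lt_eq_Ioi, Fin.card_Iio, Fin.card_Ioi]
  omega

end LowerUpperProd

section Reflect

variable {R : Type*}

theorem reflect_prod [CommSemiring R] {ι : Type*} (s : Finset ι) (g : ι → R[X])
    (N : ι → ℕ) (h : ∀ i ∈ s, (g i).natDegree ≤ N i) :
    reflect (∑ i ∈ s, N i) (∏ i ∈ s, g i) = ∏ i ∈ s, reflect (N i) (g i) := by
  induction s using Finset.cons_induction with
  | empty => simp [reflect_one]
  | cons a s _ ih =>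
    have hs : ∀ i ∈ s, (g i).natDegree ≤ N i := fun i hi => h i (mem_cons_of_mem hi)
    rw [prod_cons, prod_cons, sum_cons, reflect_mul _ _ (h a (mem_cons_self a s))
      ((natDegree_prod_le _ _).trans (sum_le_sum hs)), ih hs]

theorem natDegree_one_sub_C_mul_X_le [Ring R] (b : R) : (1 - C b * X).natDegree ≤ 1 :=
  (natDegree_sub_le _ _).trans (max_le (by simp) ((natDegree_C_mul_le b X).trans natDegree_X_le))

theorem reflect_one_sub_C_mul_X [Ring R] (b : R) : reflect 1 (1 - C b * X) = X - C b := by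
  rw [reflect_sub, reflect_one, reflect_C_mul, reflect_one_X, pow_one, mul_one]

theorem natDegree_prod_one_sub_C_mul_X_le [CommRing R] {ι : Type*} (s : Finset ι) (b : ι → R) :
    (∏ i ∈ s, (1 - C (b i) * X)).natDegree ≤ #s :=
  (natDegree_prod_le _ _).trans <| by
    simpa using sum_le_sum fun i (_ : i ∈ s) => natDegree_one_sub_C_mul_X_le (b i)

theorem reflect_prod_one_sub_C_mul_X [CommRing R] {ι : Type*} (s : Finset ι) (b : ι → R) :
    reflect #s (∏ i ∈ s, (1 - C (b i) * X)) = ∏ i ∈ s, (X - C (b i)) := by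
  simpa [reflect_one_sub_C_mul_X] using
    reflect_prod s _ (fun _ => 1) fun i _ => natDegree_one_sub_C_mul_X_le (b i)

theorem reflect_lowerUpperProd_one_sub_C_mul_X [CommRing R] {k : ℕ} (a b : Fin k → R)
    (j : Fin k) :
    reflect (k - 1)
        (lowerUpperProd (fun i => 1 - C (a i) * X) (fun i => 1 - C (b i) * X) j) =
      lowerUpperProd (fun i => X - C (a i)) (fun i => X - C (b i)) j := by
  rw [lowerUpperProd, lowerUpperProd, ← card_filter_lt_add_card_filter_gt j,
    reflect_mul _ _ (natDegree_prod_one_sub_C_mul_X_le _ _)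
      (natDegree_prod_one_sub_C_mul_X_le _ _),
    reflect_prod_one_sub_C_mul_X, reflect_prod_one_sub_C_mul_X]

noncomputable def reflectLinearEquiv [Semiring R] (N : ℕ) : R[X] ≃ₗ[R] R[X] where
  toFun := reflect N
  invFun := reflect N
  map_add' p q := reflect_add p q N
  map_smul' r p := by simp only [smul_eq_C_mul, reflect_C_mul, RingHom.id_apply]
  left_inv _ := reflect_reflect
  right_inv _ := reflect_reflect

theorem natDegree_lowerUpperProd_X_sub_C [CommRing R] [Nontrivial R] {k : ℕ} (a b : Fin k → R)
    (j : Fin k) :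
    (lowerUpperProd (fun i => X - C (a i)) (fun i => X - C (b i)) j).natDegree = k - 1 := by
  rw [lowerUpperProd, (monic_prod_of_monic _ _ fun i _ => monic_X_sub_C (a i)).natDegree_mul
    (monic_prod_of_monic _ _ fun i _ => monic_X_sub_C (b i)),
    natDegree_prod_of_monic _ _ fun i _ => monic_X_sub_C (a i),
    natDegree_prod_of_monic _ _ fun i _ => monic_X_sub_C (b i)]
  simpa using card_filter_lt_add_card_filter_gt j

end Reflect

section Field

variable {K : Type*} [Field K]

theorem LinearIndependent.card_le_of_mem_degreeLT {ι : Type*} [Fintype ι] {g : ι → K[X]}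
    {n : ℕ} (hg : LinearIndependent K g) (h : ∀ i, g i ∈ degreeLT K n) :
    Fintype.card ι ≤ n := by
  have : Module.Finite K (degreeLT K n) := .equiv (degreeLTEquiv K n).symm
  have hli : LinearIndependent K fun i => (⟨g i, h i⟩ : degreeLT K n) :=
    .of_comp (degreeLT K n).subtype hg
  simpa [(degreeLTEquiv K n).finrank_eq] using hli.fintype_card_le_finrank

theorem linearIndependent_lowerUpperProd_X_sub_C {k : ℕ} {a b : Fin k → K}
    (h : ∀ i j, i < j → a i ≠ b j) :
    LinearIndependent K (lowerUpperProd (fun i => X - C (a i)) (fun i => X - C (b i))) := by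
  induction k with
  | zero => exact linearIndependent_empty_type
  | succ k ih =>
    set F := lowerUpperProd (fun i => X - C (a i)) (fun i => X - C (b i))
    have htail : Fin.tail F = LinearMap.mulLeft K (X - C (a 0)) ∘
        lowerUpperProd (fun i => X - C (a i.succ)) (fun i => X - C (b i.succ)) :=
      funext fun j => lowerUpperProd_succ _ _ j
    rw [← Fin.cons_self_tail F, linearIndependent_finCons]
    constructor
    · rw [htail]
      exact (ih fun i j hij => h _ _ (Fin.succ_lt_succ_iff.mpr hij)).map' _
        (LinearMap.ker_eq_bot.mpr (mul_right_injective₀ (X_sub_C_ne_zero _)))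
    · -- the tail vanishes at `a 0`, the head does not
      have hspan : Submodule.span K (Set.range (Fin.tail F)) ≤ LinearMap.ker (leval (a 0)) :=
        Submodule.span_le.mpr (by rintro _ ⟨j, rfl⟩; simp [htail])
      intro hmem
      obtain ⟨j, hj⟩ : ∃ j : Fin k, a 0 = b j.succ := by
        simpa [F, lowerUpperProd_zero, eval_prod, prod_eq_zero_iff, sub_eq_zero] using hspan hmem
      exact h 0 j.succ (Fin.succ_pos j) hj

theorem not_linearIndependent_lowerUpperProd_X_sub_C {k : ℕ} {a b : Fin k → K} {i j : Fin k}
    (hij : i < j) (h : a i = b j) :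
    ¬ LinearIndependent K (lowerUpperProd (fun i => X - C (a i)) (fun i => X - C (b i))) := by
  set F := lowerUpperProd (fun i => X - C (a i)) (fun i => X - C (b i))
  have hfactor : ∀ m, (X - C (a i)) * (F m /ₘ (X - C (a i))) = F m := fun m =>
    mul_divByMonic_eq_iff_isRoot.mpr <| dvd_iff_isRoot.mp <|
      dvd_lowerUpperProd (p := fun i => X - C (a i)) hij (by rw [h]) m
  have hdeg : ∀ m, F m /ₘ (X - C (a i)) ∈ degreeLT K (k - 1) := fun m => by
    rw [mem_degreeLT]
    refine degree_le_natDegree.trans_lt ?_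
    rw [natDegree_divByMonic _ (monic_X_sub_C _), natDegree_lowerUpperProd_X_sub_C,
      natDegree_X_sub_C]
    have : (i : ℕ) < j := hij
    exact_mod_cast (by omega : k - 1 - 1 < k - 1)
  intro hF
  have hquot : LinearIndependent K fun m => F m /ₘ (X - C (a i)) :=
    .of_comp (LinearMap.mulLeft K (X - C (a i))) (by simpa [Function.comp_def, hfactor])
  have hcard := hquot.card_le_of_mem_degreeLT hdeg
  rw [Fintype.card_fin] at hcard
  omega

theorem linearIndependent_lowerUpperProd_X_sub_C_iff {k : ℕ} {a b : Fin k → K} :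
    LinearIndependent K (lowerUpperProd (fun i => X - C (a i)) (fun i => X - C (b i))) ↔
      ∀ i j, i < j → a i ≠ b j :=
  ⟨fun hF _ _ hij h => not_linearIndependent_lowerUpperProd_X_sub_C hij h hF,
    linearIndependent_lowerUpperProd_X_sub_C⟩

end Field

open PS12 in
theorem polynomials_linearIndependent_iff_general (k : ℕ)
    (a a' : Fin k → ℂ) :
    LinearIndependent ℂ (f a a') ↔ ∀ i j : Fin k, i < j → a i ≠ a' j := by
  have hreflect : reflectLinearEquiv (k - 1) ∘ f a a' =
      lowerUpperProd (fun i => X - C (a i)) (fun i => X - C (a' i)) :=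
    funext (reflect_lowerUpperProd_one_sub_C_mul_X a a')
  rw [← LinearMap.linearIndependent_iff _ (reflectLinearEquiv (k - 1)).ker,
    LinearEquiv.coe_coe, hreflect, linearIndependent_lowerUpperProd_X_sub_C_iff]

open PS12 in
/-- the polynomials `f_1, …, f_k` are linearly independent in
`ℂ[z]` if and only if `a_i ≠ a_j'` for all `1 ≤ i < j ≤ k`. -/
theorem polynomials_linearIndependent_iff (k : ℕ) (hk : 0 < k)
    (a a' : Fin k → ℂ) :
    LinearIndependent ℂ (f a a') ↔ ∀ i j : Fin k, i < j → a i ≠ a' j :=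
  polynomials_linearIndependent_iff_general k a a'
end

section
/- Let M be the k × k matrix whose (j, m) entry (for 1 ≤ j ≤ k and 0 ≤ m ≤ k − 1) is the coefficient of z^m in the polynomial f_j(z). Then det M = ∏_{1 ≤ i < j ≤ k} (a_j′ − a_i). -/
open Polynomial

namespace PS13

/-- The polynomial `f_j(z) = (∏_{i<j} (1 − z a_i)) · (∏_{i>j} (1 − z a_i'))`. -/
noncomputable def f {k : ℕ} (a a' : Fin k → ℂ) (j : Fin k) : Polynomial ℂ :=
  (∏ i ∈ Finset.univ.filter (fun i => i < j), (1 - C (a i) * X)) *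
  (∏ i ∈ Finset.univ.filter (fun i => j < i), (1 - C (a' i) * X))

/-- The `k × k` matrix whose `(j, m)` entry is the coefficient of `z^m`
in `f_j(z)`. -/
noncomputable def coeffMatrix {k : ℕ} (a a' : Fin k → ℂ) :
    Matrix (Fin k) (Fin k) ℂ :=
  Matrix.of fun j m => (f a a' j).coeff (m : ℕ)

end PS13

/-!
Subtract from each row of the coefficient matrix the row above it. Since
`f_{j+1} - f_j = (a'_{j+1} - a_j) z g_j`, where the `g_j` are the polynomials `f_j` built from
`a_1, …, a_{k-1}` and `a'_2, …, a'_k`, the first column becomes `(1, 0, …, 0)` and the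
remaining minor is the coefficient matrix of the `g_j` with row `j` scaled by `a'_{j+1} - a_j`.
Induction on `k` finishes the proof.
-/

open Finset

namespace Fin

theorem Iio_succ_eq_insert_castSucc {n : ℕ} (j : Fin n) :
    Iio j.succ = insert j.castSucc ((Iio j).map castSuccEmb) := by
  rw [map_castSuccEmb_Iio, Iio_insert]
  ext i
  simp [Fin.lt_def, Fin.le_def]

theorem Ioi_castSucc_eq_insert_succ {n : ℕ} (j : Fin n) :
    Ioi j.castSucc = insert j.succ ((Ioi j).map (succEmb n)) := by
  rw [map_succEmb_Ioi, Ioi_insert]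
  ext i
  simp [Fin.lt_def, Fin.le_def]

theorem prod_prod_Iio_succ {M : Type*} [CommMonoid M] {n : ℕ}
    (g : Fin (n + 1) → Fin (n + 1) → M) :
    ∏ j, ∏ i ∈ Iio j, g i j
      = (∏ j : Fin n, g j.castSucc j.succ)
        * ∏ j : Fin n, ∏ i ∈ Iio j, g i.castSucc j.succ := by
  rw [prod_univ_succ, Iio_eq_empty.mpr fun b _ => Fin.zero_le b, prod_empty, one_mul,
    ← prod_mul_distrib]
  refine prod_congr rfl fun j _ => ?_
  rw [Iio_succ_eq_insert_castSucc, prod_insert (by simp), prod_map, coe_castSuccEmb]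

end Fin

theorem Finset.prod_filter_lt_eq_prod_prod_Iio {α M : Type*} [Fintype α] [LinearOrder α]
    [LocallyFiniteOrderBot α] [CommMonoid M] (g : α → α → M) :
    ∏ p ∈ univ.filter (fun p : α × α => p.1 < p.2), g p.1 p.2
      = ∏ j, ∏ i ∈ Iio j, g i j := by
  rw [prod_filter, Fintype.prod_prod_type, prod_comm]
  refine prod_congr rfl fun j _ => ?_
  rw [← prod_filter, filter_gt_eq_Iio]

theorem Matrix.det_eq_det_of_sub_row_castSucc {R : Type*} [CommRing R] {n : ℕ}
    (M : Matrix (Fin (n + 1)) (Fin (n + 1)) R) (B : Matrix (Fin n) (Fin n) R) (h00 : M 0 0 = 1)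
    (hcol : ∀ j : Fin n, M j.succ 0 = M j.castSucc 0)
    (hsub : ∀ j m, M j.succ m.succ - M j.castSucc m.succ = B j m) :
    M.det = B.det := by
  set N : Matrix (Fin (n + 1)) (Fin (n + 1)) R :=
    of (Fin.cases (M 0) fun j => M j.succ - M j.castSucc)
  have hMN : M.det = N.det :=
    det_eq_of_forall_row_eq_smul_add_pred (fun _ => 1) (fun _ => rfl) fun i m => by simp [N]
  rw [hMN, det_succ_column_zero, Fin.sum_univ_succ, Finset.sum_eq_zero fun i _ => by
    simp [N, hcol]]
  simp only [N, of_apply, Fin.cases_zero, h00, Fin.val_zero, pow_zero, Fin.succAbove_zero,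
    one_mul, add_zero]
  congr 1
  ext j m
  simp [hsub]

namespace PS13

theorem f_eq_prod_Iio_mul_prod_Ioi {k : ℕ} (a a' : Fin k → ℂ) (j : Fin k) :
    f a a' j = (∏ i ∈ Iio j, (1 - C (a i) * X)) * ∏ i ∈ Ioi j, (1 - C (a' i) * X) := by
  rw [f, filter_gt_eq_Iio, filter_lt_eq_Ioi]

theorem coeff_zero_f {k : ℕ} (a a' : Fin k → ℂ) (j : Fin k) : (f a a' j).coeff 0 = 1 := by
  simp [f, coeff_zero_eq_eval_zero, eval_prod]

theorem f_succ_sub_f_castSucc {n : ℕ} (a a' : Fin (n + 1) → ℂ) (j : Fin n) :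
    f a a' j.succ - f a a' j.castSucc
      = C (a' j.succ - a j.castSucc) * X * f (a ∘ Fin.castSucc) (a' ∘ Fin.succ) j := by
  rw [f_eq_prod_Iio_mul_prod_Ioi, f_eq_prod_Iio_mul_prod_Ioi, f_eq_prod_Iio_mul_prod_Ioi,
    Fin.Iio_succ_eq_insert_castSucc, Fin.Ioi_castSucc_eq_insert_succ, ← Fin.map_succEmb_Ioi,
    ← Fin.map_castSuccEmb_Iio, prod_insert (by simp), prod_insert (by simp)]
  simp only [prod_map, Fin.coe_castSuccEmb, Fin.coe_succEmb, Function.comp_apply, map_sub]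
  ring

theorem coeff_succ_f_succ_sub_f_castSucc {n : ℕ} (a a' : Fin (n + 1) → ℂ) (j : Fin n)
    (m : ℕ) :
    (f a a' j.succ).coeff (m + 1) - (f a a' j.castSucc).coeff (m + 1)
      = (a' j.succ - a j.castSucc) * (f (a ∘ Fin.castSucc) (a' ∘ Fin.succ) j).coeff m := by
  rw [← coeff_sub, f_succ_sub_f_castSucc, mul_assoc, coeff_C_mul, coeff_X_mul]

theorem det_coeffMatrix_eq_prod_prod_Iio {k : ℕ} (a a' : Fin k → ℂ) :
    (coeffMatrix a a').det = ∏ j, ∏ i ∈ Iio j, (a' j - a i) := by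
  induction k with
  | zero => simp
  | succ n ih =>
    rw [Matrix.det_eq_det_of_sub_row_castSucc _
        (Matrix.of fun j m => (a' j.succ - a j.castSucc) *
          coeffMatrix (a ∘ Fin.castSucc) (a' ∘ Fin.succ) j m)
        (coeff_zero_f a a' 0) (fun j => by simp [coeffMatrix, coeff_zero_f])
        (fun j m => coeff_succ_f_succ_sub_f_castSucc a a' j m),
      Matrix.det_mul_column, ih, Fin.prod_prod_Iio_succ]
    rfl

end PS13

open PS13 in
theorem det_coeffMatrix_general (k : ℕ) (a a' : Fin k → ℂ) :
    (coeffMatrix a a').det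
      = ∏ p ∈ Finset.univ.filter (fun p : Fin k × Fin k => p.1 < p.2),
          (a' p.2 - a p.1) := by
  rw [prod_filter_lt_eq_prod_prod_Iio (fun i j => a' j - a i), det_coeffMatrix_eq_prod_prod_Iio]

open PS13 in
/-- the determinant of the matrix of coefficients of the
polynomials `f_j` equals `∏_{1 ≤ i < j ≤ k} (a_j' − a_i)`. -/
theorem det_coeffMatrix (k : ℕ) (hk : 0 < k) (a a' : Fin k → ℂ) :
    (coeffMatrix a a').det
      = ∏ p ∈ Finset.univ.filter (fun p : Fin k × Fin k => p.1 < p.2),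
          (a' p.2 - a p.1) :=
  det_coeffMatrix_general k a a'
end
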